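/- For nonempty compact metric spaces (X₁,ρ₁) and (X₂,ρ₂), the quantum Gromov–Hausdorff distance between the associated compact quantum metric spaces satisfies dist_q((Lip(X₁),L_{ρ₁}), (Lip(X₂),L_{ρ₂})) ≤ dist_GH(X₁,X₂). -/

import Mathlib

/-!
Embed `X₁` and `X₂` isometrically into a common space `Z` so that their images are at Hausdorff
distance `d_GH(X₁, X₂)`, and glue them into one compact metric space `X₁ ⊔ X₂`, keeping the two
pieces a small distance `δ` apart. The Lipschitz seminorm of `X₁ ⊔ X₂` is a seminorm on
`Lip(X₁) ⊕ Lip(X₂)`. By McShane's extension theorem it induces `L_{ρ₁}` and `L_{ρ₂}`, and by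
Arzelà–Ascoli its unit ball is totally bounded modulo constants, which makes it a Lip-norm.

A state `μ` of `Lip(X₁)` is moved to `Lip(X₂)` along a map `T : X₁ → X₂` with
`ρ(x, T x) ≤ d_GH + δ`: for a Lipschitz partition of unity `(φᵢ)` subordinate to small balls
around points `xᵢ`, put `ν(g) = Σ μ(φᵢ) g(T xᵢ)`. Then `|μ(f) − ν(g)| ≤ d_GH + O(δ)` for every
`(f, g)` in the unit ball, so the two state spaces are within `d_GH + O(δ)` of each other.
-/

open scoped ENNReal NNReal

/-- An order-unit space in the sense of Kadison: a partially ordered real vector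
space with a positive order unit `e` satisfying the order-unit property and the
Archimedean property. -/
structure OrderUnitSpace : Type 1 where
  carrier : Type
  [toAddCommGroup : AddCommGroup carrier]
  [toModule : Module ℝ carrier]
  [toPartialOrder : PartialOrder carrier]
  add_le_add_left' : ∀ a b : carrier, a ≤ b → ∀ c : carrier, c + a ≤ c + b
  smul_nonneg' : ∀ (r : ℝ) (a : carrier), 0 ≤ r → 0 ≤ a → 0 ≤ r • a
  e : carrier
  e_nonneg : 0 ≤ e
  orderUnit : ∀ a : carrier, ∃ r : ℝ, a ≤ r • e
  arch : ∀ a : carrier, (∀ r : ℝ, 0 < r → a ≤ r • e) → a ≤ 0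

attribute [instance] OrderUnitSpace.toAddCommGroup OrderUnitSpace.toModule
  OrderUnitSpace.toPartialOrder

/-- The topology generated by the open balls of a distance function. -/
def ballTopology {S : Type*} (ρ : S → S → ℝ≥0∞) : TopologicalSpace S :=
  TopologicalSpace.generateFrom
    {U : Set S | ∃ (μ : S) (ε : ℝ≥0∞), 0 < ε ∧ U = {ν | ρ μ ν < ε}}

/-- The quotient seminorm of `L` along the surjection `π`. -/
noncomputable def quotientSeminorm {α β : Type*} (π : α → β) (L : α → ℝ) (b : β) : ℝ :=
  sInf {r : ℝ | ∃ a, π a = b ∧ L a = r}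

/-- `L` induces `LB` via `π`, i.e. `LB` is the quotient seminorm of `L` for `π`. -/
def Induces {α β : Type*} (π : α → β) (L : α → ℝ) (LB : β → ℝ) : Prop :=
  ∀ b, LB b = quotientSeminorm π L b

/-- Hausdorff distance between two subsets with respect to a distance function. -/
noncomputable def hausdorffDistWith {S : Type*} (ρ : S → S → ℝ≥0∞) (T U : Set S) : ℝ≥0∞ :=
  max (⨆ t ∈ T, ⨅ u ∈ U, ρ t u) (⨆ u ∈ U, ⨅ t ∈ T, ρ t u)

namespace OrderUnitSpace

variable (A B : OrderUnitSpace)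

theorem le_of_sub_nonneg'' {x y : A.carrier} (h : 0 ≤ y - x) : x ≤ y := by
  have h2 := A.add_le_add_left' 0 (y - x) h x
  have h3 : x + (y - x) = y := by abel
  rw [add_zero, h3] at h2
  exact h2

theorem smul_e_mono {r s : ℝ} (h : r ≤ s) : r • A.e ≤ s • A.e := by
  apply A.le_of_sub_nonneg''
  have h3 : s • A.e - r • A.e = (s - r) • A.e := by rw [sub_smul]
  rw [h3]
  exact A.smul_nonneg' _ _ (by linarith) A.e_nonneg

/-- The order-unit norm. -/
noncomputable def onorm (a : A.carrier) : ℝ :=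
  sInf {r : ℝ | -(r • A.e) ≤ a ∧ a ≤ r • A.e}

/-- A state: a unital positive linear functional. -/
def IsState (μ : A.carrier →ₗ[ℝ] ℝ) : Prop :=
  μ A.e = 1 ∧ ∀ a : A.carrier, 0 ≤ a → 0 ≤ μ a

/-- The state space. -/
def State : Type := {μ : A.carrier →ₗ[ℝ] ℝ // A.IsState μ}

/-- The weak-* topology on the state space. -/
instance : TopologicalSpace A.State :=
  TopologicalSpace.induced (fun μ : A.State => (μ.1 : A.carrier → ℝ)) Pi.topologicalSpace

/-- The metric `ρ_L` on the state space defined by a seminorm `L`. -/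
noncomputable def rho (L : Seminorm ℝ A.carrier) (μ ν : A.State) : ℝ≥0∞ :=
  ⨆ a : {a : A.carrier // L a ≤ 1}, ENNReal.ofReal |μ.1 a.1 - ν.1 a.1|

/-- A Lipschitz seminorm: its null space is exactly `ℝ e`. -/
def IsLipschitz (L : Seminorm ℝ A.carrier) : Prop :=
  ∀ a : A.carrier, L a = 0 ↔ ∃ t : ℝ, a = t • A.e

/-- A Lip-norm: a Lipschitz seminorm whose metric `ρ_L` induces the weak-* topology. -/
def IsLipNorm (L : Seminorm ℝ A.carrier) : Prop :=
  A.IsLipschitz L ∧ ballTopology (A.rho L) = (inferInstance : TopologicalSpace A.State)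

/-- The diameter of the state space for `ρ_L`. -/
noncomputable def diam (L : Seminorm ℝ A.carrier) : ℝ≥0∞ :=
  ⨆ (μ : A.State) (ν : A.State), A.rho L μ ν

/-- The radius: half the diameter. -/
noncomputable def radius (L : Seminorm ℝ A.carrier) : ℝ≥0∞ := A.diam L / 2

/-- Morphism of order-unit spaces: a unital positive linear map. -/
def IsMorphism (f : A.carrier →ₗ[ℝ] B.carrier) : Prop :=
  f A.e = B.e ∧ ∀ a : A.carrier, 0 ≤ a → 0 ≤ f a

/-- Pull back a state along a morphism; this is `S(π)`. -/
noncomputable def pullState (f : A.carrier →ₗ[ℝ] B.carrier) (hf : A.IsMorphism B f)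
    (μ : B.State) : A.State :=
  ⟨(μ.1).comp f, by
    constructor
    · rw [LinearMap.comp_apply, hf.1]; exact μ.2.1
    · intro a ha; exact μ.2.2 _ (hf.2 a ha)⟩

/-- The direct sum `A ⊕ B` as an order-unit space. -/
@[reducible] def prod : OrderUnitSpace where
  carrier := A.carrier × B.carrier
  add_le_add_left' := by
    intro a b hab c
    rw [Prod.le_def] at hab ⊢
    exact ⟨A.add_le_add_left' _ _ hab.1 _, B.add_le_add_left' _ _ hab.2 _⟩
  smul_nonneg' := by
    intro r a hr ha
    rw [Prod.le_def] at ha ⊢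
    exact ⟨A.smul_nonneg' r a.1 hr ha.1, B.smul_nonneg' r a.2 hr ha.2⟩
  e := (A.e, B.e)
  e_nonneg := by
    rw [Prod.le_def]
    exact ⟨A.e_nonneg, B.e_nonneg⟩
  orderUnit := by
    intro a
    obtain ⟨r₁, h1⟩ := A.orderUnit a.1
    obtain ⟨r₂, h2⟩ := B.orderUnit a.2
    refine ⟨max r₁ r₂, ?_⟩
    rw [Prod.le_def]
    exact ⟨le_trans h1 (A.smul_e_mono (le_max_left _ _)),
      le_trans h2 (B.smul_e_mono (le_max_right _ _))⟩
  arch := by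
    intro a h
    rw [Prod.le_def]
    exact ⟨A.arch a.1 fun r hr => ((Prod.le_def.mp (h r hr)).1),
      B.arch a.2 fun r hr => ((Prod.le_def.mp (h r hr)).2)⟩

/-- The embedding of `S(A)` into `S(A ⊕ B)` dual to the first coordinate projection. -/
noncomputable def leftState (μ : A.State) : (A.prod B).State :=
  ⟨(μ.1).comp (LinearMap.fst ℝ A.carrier B.carrier), by
    constructor
    · exact μ.2.1
    · intro p hp; exact μ.2.2 p.1 hp.1⟩

/-- The embedding of `S(B)` into `S(A ⊕ B)` dual to the second coordinate projection. -/
noncomputable def rightState (ν : B.State) : (A.prod B).State :=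
  ⟨(ν.1).comp (LinearMap.snd ℝ A.carrier B.carrier), by
    constructor
    · exact ν.2.1
    · intro p hp; exact ν.2.2 p.2 hp.2⟩

/-- The set `M(L_A, L_B)` of Lip-norms on `A ⊕ B` inducing `L_A` and `L_B`
via the coordinate projections. -/
def admissible (LA : Seminorm ℝ A.carrier) (LB : Seminorm ℝ B.carrier) :
    Set (Seminorm ℝ (A.prod B).carrier) :=
  {L | (A.prod B).IsLipNorm L ∧
    Induces (Prod.fst : A.carrier × B.carrier → A.carrier) (fun p => L p) (fun a => LA a) ∧
    Induces (Prod.snd : A.carrier × B.carrier → B.carrier) (fun p => L p) (fun b => LB b)}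

/-- Quantum Gromov–Hausdorff distance. -/
noncomputable def distq (LA : Seminorm ℝ A.carrier) (LB : Seminorm ℝ B.carrier) : ℝ≥0∞ :=
  ⨅ L ∈ A.admissible B LA LB,
    hausdorffDistWith ((A.prod B).rho L) (Set.range (A.leftState B)) (Set.range (A.rightState B))

end OrderUnitSpace

/-- The space of real-valued Lipschitz functions on a metric space, as a submodule
of `X → ℝ`. -/
def lipSubmodule (X : Type) [MetricSpace X] : Submodule ℝ (X → ℝ) where
  carrier := {f : X → ℝ | ∃ K : ℝ≥0, LipschitzWith K f}
  add_mem' := by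
    rintro f g ⟨Kf, hf⟩ ⟨Kg, hg⟩
    exact ⟨Kf + Kg, hf.add hg⟩
  zero_mem' := ⟨0, LipschitzWith.const' (0 : ℝ)⟩
  smul_mem' := by
    rintro c f ⟨K, hf⟩
    exact ⟨‖c‖₊ * K, (lipschitzWith_smul c).comp hf⟩

theorem mem_lipSubmodule {X : Type} [MetricSpace X] {f : X → ℝ} :
    f ∈ lipSubmodule X ↔ ∃ K : ℝ≥0, LipschitzWith K f := Iff.rfl

/-- The order-unit space of real-valued Lipschitz functions on a nonempty compact
metric space, with pointwise order and order unit the constant function `1`. -/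
@[reducible] noncomputable def lipOUS (X : Type) [MetricSpace X] [CompactSpace X] [Nonempty X] :
    OrderUnitSpace where
  carrier := lipSubmodule X
  add_le_add_left' := by
    intro f g hfg h
    rw [← Subtype.coe_le_coe] at hfg ⊢
    intro x
    simp only [Submodule.coe_add, Pi.add_apply]
    linarith [hfg x]
  smul_nonneg' := by
    intro r f hr hf
    rw [← Subtype.coe_le_coe] at hf ⊢
    intro x
    simp only [Submodule.coe_smul, Pi.smul_apply, smul_eq_mul, ZeroMemClass.coe_zero,
      Pi.zero_apply] at hf ⊢
    exact mul_nonneg hr (hf x)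
  e := ⟨fun _ => (1 : ℝ), ⟨0, LipschitzWith.const' (1 : ℝ)⟩⟩
  e_nonneg := by
    rw [← Subtype.coe_le_coe]
    intro x
    simp
  orderUnit := by
    intro f
    obtain ⟨K, hK⟩ := mem_lipSubmodule.mp f.2
    obtain ⟨x₀, -, hx₀⟩ := isCompact_univ.exists_isMaxOn Set.univ_nonempty
      hK.continuous.continuousOn
    refine ⟨f.1 x₀, ?_⟩
    rw [← Subtype.coe_le_coe]
    intro x
    simp only [Submodule.coe_smul, Pi.smul_apply, smul_eq_mul, mul_one]
    exact isMaxOn_iff.mp hx₀ x (Set.mem_univ x)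
  arch := by
    intro f h
    rw [← Subtype.coe_le_coe]
    intro x
    simp only [ZeroMemClass.coe_zero, Pi.zero_apply]
    refine le_of_forall_pos_le_add ?_
    intro r hr
    have := h r hr
    rw [← Subtype.coe_le_coe] at this
    have hx := this x
    simp only [Submodule.coe_smul, Pi.smul_apply, smul_eq_mul, mul_one] at hx
    linarith

/-- The Lipschitz constant of a real-valued function on a metric space:
`sup {|f x − f y| / d(x,y) : x ≠ y}`. -/
noncomputable def lipConst (X : Type) [MetricSpace X] (f : X → ℝ) : ℝ :=
  sSup ((fun p : X × X => |f p.1 - f p.2| / dist p.1 p.2) '' {p : X × X | p.1 ≠ p.2})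

open scoped Topology

theorem isOpen_ballTopology {S : Type*} {ρ : S → S → ℝ≥0∞} {U : Set S}
    (h : ∀ s ∈ U, ∃ ε > 0, ρ s s < ε ∧ {ν | ρ s ν < ε} ⊆ U) :
    IsOpen[ballTopology ρ] U := by
  refine @isOpen_iff_forall_mem_open _ (ballTopology ρ) _ |>.2 fun s hs => ?_
  obtain ⟨ε, hε, hs_ball, hsub⟩ := h s hs
  exact ⟨_, hsub, TopologicalSpace.isOpen_generateFrom_of_mem ⟨s, ε, hε, rfl⟩, hs_ball⟩

theorem hausdorffDistWith_range_le {S α β : Type*} {ρ : S → S → ℝ≥0∞} {f : α → S}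
    {g : β → S} {c : ℝ≥0∞} (hfg : ∀ a, ∃ b, ρ (f a) (g b) ≤ c)
    (hgf : ∀ b, ∃ a, ρ (f a) (g b) ≤ c) :
    hausdorffDistWith ρ (Set.range f) (Set.range g) ≤ c := by
  refine max_le (iSup₂_le ?_) (iSup₂_le ?_)
  · rintro _ ⟨a, rfl⟩
    obtain ⟨b, hb⟩ := hfg a
    exact (iInf₂_le _ ⟨b, rfl⟩).trans hb
  · rintro _ ⟨b, rfl⟩
    obtain ⟨a, ha⟩ := hgf b
    exact (iInf₂_le _ ⟨a, rfl⟩).trans ha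

theorem quotientSeminorm_eq {α β : Type*} {π : α → β} {L : α → ℝ} {b : β} {c : ℝ}
    (hc : ∀ a, π a = b → c ≤ L a) {a : α} (ha : π a = b) (hLa : L a ≤ c) :
    quotientSeminorm π L b = c :=
  IsLeast.csInf_eq
    ⟨⟨a, ha, le_antisymm hLa (hc a ha)⟩, by rintro _ ⟨a', ha', rfl⟩; exact hc a' ha'⟩

namespace OrderUnitSpace

variable {A : OrderUnitSpace}

theorem sub_nonneg_of_le {a b : A.carrier} (h : a ≤ b) : 0 ≤ b - a := by
  simpa [neg_add_eq_sub] using A.add_le_add_left' a b h (-a)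

variable (A) in
def NormLE (M : ℝ) (a : A.carrier) : Prop := -(M • A.e) ≤ a ∧ a ≤ M • A.e

theorem normLE_prod {B : OrderUnitSpace} {M : ℝ} {a : A.carrier} {b : B.carrier}
    (ha : A.NormLE M a) (hb : B.NormLE M b) : (A.prod B).NormLE M (a, b) :=
  ⟨⟨ha.1, hb.1⟩, ⟨ha.2, hb.2⟩⟩

namespace State

theorem apply_smul_e (μ : A.State) (t : ℝ) : μ.1 (t • A.e) = t := by
  rw [map_smul, μ.2.1, smul_eq_mul, mul_one]

theorem abs_apply_le (μ : A.State) {M : ℝ} {a : A.carrier} (h : A.NormLE M a) :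
    |μ.1 a| ≤ M := by
  have h₁ := μ.2.2 _ (sub_nonneg_of_le h.1)
  have h₂ := μ.2.2 _ (sub_nonneg_of_le h.2)
  rw [map_sub, map_neg, apply_smul_e] at h₁
  rw [map_sub, apply_smul_e] at h₂
  exact abs_le.2 ⟨by linarith, by linarith⟩

theorem continuous_apply (a : A.carrier) : Continuous fun μ : A.State => μ.1 a :=
  (_root_.continuous_apply a).comp continuous_induced_dom

end State

variable {L : Seminorm ℝ A.carrier}

theorem rho_self (μ : A.State) : A.rho L μ μ = 0 := by
  simp [rho]

theorem ofReal_abs_sub_le_rho {a : A.carrier} (ha : L a ≤ 1) (μ ν : A.State) :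
    ENNReal.ofReal |μ.1 a - ν.1 a| ≤ A.rho L μ ν :=
  le_iSup (fun a : {a // L a ≤ 1} => ENNReal.ofReal |μ.1 a.1 - ν.1 a.1|) ⟨a, ha⟩

theorem rho_le_ofReal {μ ν : A.State} {r : ℝ}
    (h : ∀ a, L a ≤ 1 → |μ.1 a - ν.1 a| ≤ r) : A.rho L μ ν ≤ ENNReal.ofReal r :=
  iSup_le fun a => ENNReal.ofReal_le_ofReal (h a.1 a.2)

theorem rho_triangle (μ κ ν : A.State) : A.rho L μ ν ≤ A.rho L μ κ + A.rho L κ ν := by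
  refine iSup_le fun a => ?_
  calc ENNReal.ofReal |μ.1 a.1 - ν.1 a.1|
      ≤ ENNReal.ofReal (|μ.1 a.1 - κ.1 a.1| + |κ.1 a.1 - ν.1 a.1|) :=
        ENNReal.ofReal_le_ofReal (abs_sub_le _ _ _)
    _ ≤ ENNReal.ofReal |μ.1 a.1 - κ.1 a.1| + ENNReal.ofReal |κ.1 a.1 - ν.1 a.1| :=
        ENNReal.ofReal_add_le
    _ ≤ A.rho L μ κ + A.rho L κ ν :=
        add_le_add (ofReal_abs_sub_le_rho a.2 μ κ) (ofReal_abs_sub_le_rho a.2 κ ν)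

theorem abs_sub_lt_of_rho_lt (a : A.carrier) {μ ν : A.State} {ε : ℝ}
    (h : A.rho L μ ν < ENNReal.ofReal (ε / (L a + 1))) : |μ.1 a - ν.1 a| < ε := by
  have hk : 0 < L a + 1 := by linarith [apply_nonneg L a]
  have hunit : L ((L a + 1)⁻¹ • a) ≤ 1 := by
    rw [map_smul_eq_mul, Real.norm_of_nonneg (inv_nonneg.2 hk.le), inv_mul_le_one₀ hk]
    linarith
  have := (ofReal_abs_sub_le_rho hunit μ ν).trans_lt h
  rw [ENNReal.ofReal_lt_ofReal_iff_of_nonneg (abs_nonneg _), map_smul, map_smul, smul_eq_mul,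
    smul_eq_mul, ← mul_sub, abs_mul, abs_of_pos (inv_pos.2 hk), inv_mul_lt_iff₀ hk] at this
  rwa [mul_div_cancel₀ _ hk.ne'] at this

variable (A L) in
theorem ballTopology_rho_le :
    ballTopology (A.rho L) ≤ (inferInstance : TopologicalSpace A.State) := by
  refine continuous_iff_le_induced.1 (@continuous_pi _ _ _ (ballTopology (A.rho L)) _ _
    fun a => @continuous_def _ _ (ballTopology (A.rho L)) _ _ |>.2 fun s hs => ?_)
  refine isOpen_ballTopology fun ν₀ hν₀ => ?_
  obtain ⟨ε, hε, hball⟩ := Metric.isOpen_iff.1 hs _ hν₀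
  have hk : 0 < L a + 1 := by linarith [apply_nonneg L a]
  refine ⟨ENNReal.ofReal (ε / (L a + 1)), ENNReal.ofReal_pos.2 (by positivity), ?_, ?_⟩
  · rw [rho_self]; exact ENNReal.ofReal_pos.2 (by positivity)
  · intro ν hν
    apply hball
    rw [Metric.mem_ball, Real.dist_eq, abs_sub_comm]
    exact abs_sub_lt_of_rho_lt a hν

theorem rho_le_of_net {F : Set A.carrier} {η κ : ℝ}
    (hF : ∀ a, L a ≤ 1 → ∃ b ∈ F, ∃ t : ℝ, A.NormLE η (a - t • A.e - b))
    {μ ν : A.State} (h : ∀ b ∈ F, |μ.1 b - ν.1 b| ≤ κ) :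
    A.rho L μ ν ≤ ENNReal.ofReal (κ + 2 * η) := by
  refine rho_le_ofReal fun a ha => ?_
  obtain ⟨b, hb, t, hc⟩ := hF a ha
  have hsplit : ∀ ω : A.State, ω.1 a = ω.1 (a - t • A.e - b) + t + ω.1 b := fun ω => by
    rw [map_sub, map_sub, State.apply_smul_e]; ring
  have hμ := abs_le.1 (μ.abs_apply_le hc)
  have hν := abs_le.1 (ν.abs_apply_le hc)
  have hμν := abs_le.1 (h b hb)
  rw [hsplit μ, hsplit ν, abs_le]
  constructor <;> linarith

theorem isLipNorm_of_finite_net (hL : A.IsLipschitz L)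
    (hnet : ∀ η > 0, ∃ F : Set A.carrier, F.Finite ∧
      ∀ a, L a ≤ 1 → ∃ b ∈ F, ∃ t : ℝ, A.NormLE η (a - t • A.e - b)) :
    A.IsLipNorm L := by
  refine ⟨hL, le_antisymm (ballTopology_rho_le A L) ?_⟩
  refine TopologicalSpace.le_generateFrom_iff_subset_isOpen.2 ?_
  rintro _ ⟨μ, ε, -, rfl⟩
  refine (isOpen_iff_forall_mem_open (X := A.State)).2 fun ν₀ hν₀ => ?_
  obtain ⟨g, hg, hlt⟩ := ENNReal.lt_iff_exists_add_pos_lt.1 hν₀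
  obtain ⟨F, hFfin, hF⟩ := hnet (g / 4) (by positivity)
  refine ⟨⋂ b ∈ F, {ν | |ν₀.1 b - ν.1 b| < g / 4}, fun ν hν => ?_,
    hFfin.isOpen_biInter fun b _ =>
      isOpen_lt (g := fun _ : A.State => (g : ℝ) / 4)
        (continuous_const.sub (State.continuous_apply b)).abs continuous_const,
    Set.mem_iInter₂.2 fun b _ => by simpa using hg⟩
  have hnear : A.rho L ν₀ ν ≤ g := by
    refine (rho_le_of_net hF fun b hb => (Set.mem_iInter₂.1 hν b hb).le).trans ?_
    rw [← ENNReal.ofReal_coe_nnreal]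
    exact ENNReal.ofReal_le_ofReal (by linarith)
  calc A.rho L μ ν ≤ A.rho L μ ν₀ + A.rho L ν₀ ν := rho_triangle μ ν₀ ν
    _ ≤ A.rho L μ ν₀ + g := by gcongr
    _ < ε := hlt

end OrderUnitSpace

section LipConst

variable {W : Type} [MetricSpace W] {f : W → ℝ}

theorem lipConst_nonneg (f : W → ℝ) : 0 ≤ lipConst W f :=
  Real.sSup_nonneg <| by rintro _ ⟨p, -, rfl⟩; positivity

theorem lipConst_le {K : ℝ} (hK : 0 ≤ K) (h : ∀ x y, |f x - f y| ≤ K * dist x y) :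
    lipConst W f ≤ K := by
  refine Real.sSup_le ?_ hK
  rintro _ ⟨p, hp, rfl⟩
  exact (div_le_iff₀ (dist_pos.2 hp)).2 (h p.1 p.2)

theorem LipschitzWith.abs_sub_le_lipConst {K : ℝ≥0} (hf : LipschitzWith K f) (x y : W) :
    |f x - f y| ≤ lipConst W f * dist x y := by
  rcases eq_or_ne x y with rfl | hxy
  · simp
  have hbdd : BddAbove ((fun p : W × W => |f p.1 - f p.2| / dist p.1 p.2) ''
      {p : W × W | p.1 ≠ p.2}) := by
    refine ⟨K, ?_⟩
    rintro _ ⟨p, hp, rfl⟩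
    rw [div_le_iff₀ (dist_pos.2 hp), ← Real.dist_eq]
    exact hf.dist_le_mul p.1 p.2
  rw [← div_le_iff₀ (dist_pos.2 hxy)]
  exact le_csSup hbdd ⟨(x, y), hxy, rfl⟩

theorem LipschitzWith.lipConst_le_iff {K₀ : ℝ≥0} (hf : LipschitzWith K₀ f) {K : ℝ}
    (hK : 0 ≤ K) :
    lipConst W f ≤ K ↔ ∀ x y, |f x - f y| ≤ K * dist x y :=
  ⟨fun h x y => (hf.abs_sub_le_lipConst x y).trans (by gcongr), lipConst_le hK⟩

theorem LipschitzWith.lipschitzWith_lipConst {K : ℝ≥0} (hf : LipschitzWith K f) :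
    LipschitzWith (lipConst W f).toNNReal f :=
  LipschitzWith.of_dist_le' fun x y => by
    rw [Real.dist_eq]; exact hf.abs_sub_le_lipConst x y

theorem LipschitzWith.lipConst_le {K : ℝ≥0} (hf : LipschitzWith K f) : lipConst W f ≤ K :=
  _root_.lipConst_le K.coe_nonneg fun x y => by rw [← Real.dist_eq]; exact hf.dist_le_mul x y

variable (W) in
noncomputable def lipSeminorm : Seminorm ℝ (lipSubmodule W) :=
  Seminorm.ofSMulLE (fun f => lipConst W f.1)
    ((lipConst_le le_rfl fun x y => by simp).antisymm (lipConst_nonneg _))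
    (fun f g => by
      obtain ⟨Kf, hf⟩ := f.2
      obtain ⟨Kg, hg⟩ := g.2
      refine lipConst_le (add_nonneg (lipConst_nonneg _) (lipConst_nonneg _)) fun x y => ?_
      calc |(f + g).1 x - (f + g).1 y| = |(f.1 x - f.1 y) + (g.1 x - g.1 y)| := by
            simp only [Submodule.coe_add, Pi.add_apply]; ring_nf
        _ ≤ |f.1 x - f.1 y| + |g.1 x - g.1 y| := abs_add_le _ _
        _ ≤ lipConst W f.1 * dist x y + lipConst W g.1 * dist x y :=
          add_le_add (hf.abs_sub_le_lipConst x y) (hg.abs_sub_le_lipConst x y)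
        _ = (lipConst W f.1 + lipConst W g.1) * dist x y := by ring)
    (fun c f => by
      obtain ⟨K, hf⟩ := f.2
      refine lipConst_le (mul_nonneg (norm_nonneg c) (lipConst_nonneg _)) fun x y => ?_
      simp only [Submodule.coe_smul, Pi.smul_apply, smul_eq_mul, ← mul_sub, abs_mul,
        Real.norm_eq_abs, mul_assoc]
      exact mul_le_mul_of_nonneg_left (hf.abs_sub_le_lipConst x y) (abs_nonneg c))

theorem Isometry.exists_lipschitzWith_extension {V : Type} [MetricSpace V] {i : V → W}
    (hi : Isometry i) {g : V → ℝ} {K : ℝ≥0} (hg : LipschitzWith K g) :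
    ∃ H : W → ℝ, H ∘ i = g ∧ LipschitzWith (lipConst V g).toNNReal H := by
  have hext : LipschitzOnWith (lipConst V g).toNNReal (Function.extend i g 0) (Set.range i) := by
    refine LipschitzOnWith.of_dist_le_mul ?_
    rintro _ ⟨x, rfl⟩ _ ⟨y, rfl⟩
    rw [hi.injective.extend_apply, hi.injective.extend_apply, hi.dist_eq]
    exact hg.lipschitzWith_lipConst.dist_le_mul x y
  obtain ⟨H, hH, hEq⟩ := hext.extend_real
  exact ⟨H, funext fun x => (hEq ⟨x, rfl⟩).symm.trans (hi.injective.extend_apply g 0 x), hH⟩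

theorem inv_mem_lipSubmodule {m : ℝ} (hm : 0 < m) (hf : f ∈ lipSubmodule W)
    (hfm : ∀ x, m ≤ f x) : f⁻¹ ∈ lipSubmodule W := by
  obtain ⟨K, hK⟩ := hf
  refine ⟨_, LipschitzWith.of_dist_le' (K := K / (m * m)) fun x y => ?_⟩
  have hx : 0 < f x := hm.trans_le (hfm x)
  have hy : 0 < f y := hm.trans_le (hfm y)
  rw [Real.dist_eq, Pi.inv_apply, Pi.inv_apply, inv_sub_inv hx.ne' hy.ne', abs_div, abs_mul,
    abs_of_pos hx, abs_of_pos hy, abs_sub_comm, ← Real.dist_eq]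
  calc dist (f x) (f y) / (f x * f y) ≤ K * dist x y / (m * m) := by
        gcongr
        · exact hK.dist_le_mul x y
        · exact hfm x
        · exact hfm y
    _ = K / (m * m) * dist x y := by ring

variable [CompactSpace W] {g : W → ℝ}

theorem exists_abs_le_of_mem_lipSubmodule (hf : f ∈ lipSubmodule W) :
    ∃ M, ∀ x, |f x| ≤ M := by
  obtain ⟨K, hK⟩ := hf
  obtain ⟨M, hM⟩ := isCompact_univ.exists_bound_of_continuousOn hK.continuous.continuousOn
  exact ⟨M, fun x => hM x trivial⟩

theorem mul_mem_lipSubmodule (hf : f ∈ lipSubmodule W) (hg : g ∈ lipSubmodule W) :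
    f * g ∈ lipSubmodule W := by
  obtain ⟨Kf, hKf⟩ := hf
  obtain ⟨Kg, hKg⟩ := hg
  obtain ⟨Mf, hMf⟩ := exists_abs_le_of_mem_lipSubmodule ⟨Kf, hKf⟩
  obtain ⟨Mg, hMg⟩ := exists_abs_le_of_mem_lipSubmodule ⟨Kg, hKg⟩
  refine ⟨_, LipschitzWith.of_dist_le' (K := Mf * Kg + Mg * Kf) fun x y => ?_⟩
  have hMf0 : 0 ≤ Mf := (abs_nonneg _).trans (hMf x)
  have hMg0 : 0 ≤ Mg := (abs_nonneg _).trans (hMg x)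
  rw [Real.dist_eq, Pi.mul_apply, Pi.mul_apply,
    show f x * g x - f y * g y = f x * (g x - g y) + (f x - f y) * g y by ring]
  calc |f x * (g x - g y) + (f x - f y) * g y|
      ≤ |f x| * |g x - g y| + |f x - f y| * |g y| := by
        rw [← abs_mul, ← abs_mul]; exact abs_add_le _ _
    _ ≤ Mf * (Kg * dist x y) + Kf * dist x y * Mg := by
        gcongr
        · exact hMf x
        · rw [← Real.dist_eq]; exact hKg.dist_le_mul x y
        · rw [← Real.dist_eq]; exact hKf.dist_le_mul x y
        · exact hMg y
    _ = (Mf * Kg + Mg * Kf) * dist x y := by ring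

end LipConst

section LipOUS

variable {X Y : Type} [MetricSpace X] [CompactSpace X] [Nonempty X]
  [MetricSpace Y] [CompactSpace Y] [Nonempty Y]

theorem lipOUS_normLE {M : ℝ} {f : (lipOUS X).carrier} (h : ∀ x, |f.1 x| ≤ M) :
    (lipOUS X).NormLE M f :=
  ⟨fun x => by simpa using (abs_le.1 (h x)).1, fun x => by simpa using (abs_le.1 (h x)).2⟩

noncomputable def convexState {ι : Type} (s : Finset ι) (w : ι → ℝ) (y : ι → Y)
    (hw₀ : ∀ i, 0 ≤ w i) (hw₁ : ∑ i ∈ s, w i = 1) : (lipOUS Y).State :=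
  ⟨{ toFun := fun g => ∑ i ∈ s, w i * g.1 (y i)
     map_add' := fun g g' => by simp only [Submodule.coe_add, Pi.add_apply, mul_add,
       Finset.sum_add_distrib]
     map_smul' := fun c g => by simp only [Submodule.coe_smul, Pi.smul_apply, smul_eq_mul,
       RingHom.id_apply, Finset.mul_sum, mul_left_comm] },
   by simpa using hw₁, fun g hg => Finset.sum_nonneg fun i _ => mul_nonneg (hw₀ i) (hg (y i))⟩

theorem exists_lipschitz_partitionOfUnity {η : ℝ} (hη : 0 < η) :
    ∃ (s : Finset X) (φ : X → (lipOUS X).carrier), (∀ i x, 0 ≤ (φ i).1 x) ∧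
      ∑ i ∈ s, φ i = (lipOUS X).e ∧ ∀ i x, (φ i).1 x ≠ 0 → dist x i < η := by
  obtain ⟨s, -, hcov⟩ := (isCompact_univ (X := X)).elim_nhds_subcover
    (fun i => Metric.ball i (η / 2)) fun i _ => Metric.ball_mem_nhds i (by positivity)
  set ψ : X → X → ℝ := fun i x => max (η - dist x i) 0
  have hψ_mem : ∀ i, ψ i ∈ lipSubmodule X := fun i =>
    ⟨_, ((LipschitzWith.const η).sub (LipschitzWith.dist_left i)).max_const 0⟩
  set S : X → ℝ := ∑ i ∈ s, ψ i
  have hS : ∀ x, η / 2 ≤ S x := fun x => by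
    obtain ⟨i, hi, hx⟩ := Set.mem_iUnion₂.1 (hcov (Set.mem_univ x))
    rw [Metric.mem_ball] at hx
    calc η / 2 ≤ ψ i x := le_max_of_le_left (by linarith)
      _ ≤ S x := by
        simp only [S, Finset.sum_apply]
        exact Finset.single_le_sum (f := fun j => ψ j x) (fun j _ => le_max_right _ _) hi
  have hS_inv : S⁻¹ ∈ lipSubmodule X :=
    inv_mem_lipSubmodule (by positivity) (Submodule.sum_mem _ fun i _ => hψ_mem i) hS
  refine ⟨s, fun i => ⟨ψ i * S⁻¹, mul_mem_lipSubmodule (hψ_mem i) hS_inv⟩,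
    fun i x => mul_nonneg (le_max_right _ _) (inv_nonneg.2 (by linarith [hS x])), ?_,
    fun i x hx => ?_⟩
  · refine Subtype.ext (funext fun x => ?_)
    have hSx : S x ≠ 0 := by linarith [hS x]
    simpa [← Finset.sum_mul, S] using mul_inv_cancel₀ hSx
  · by_contra hfar
    exact hx (by simp [ψ, max_eq_right (by linarith : η - dist x i ≤ 0)])

theorem exists_state_abs_sub_le (μ : (lipOUS X).State) (T : X → Y) {η : ℝ} (hη : 0 < η) :
    ∃ ν : (lipOUS Y).State, ∀ (f : (lipOUS X).carrier) (g : (lipOUS Y).carrier) (r : ℝ),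
      (∀ x x', |f.1 x - f.1 x'| ≤ dist x x') → (∀ x, |f.1 x - g.1 (T x)| ≤ r) →
        |μ.1 f - ν.1 g| ≤ r + η := by
  obtain ⟨s, φ, hφ₀, hφ₁, hφη⟩ := exists_lipschitz_partitionOfUnity (X := X) hη
  have hφ₁' : ∀ x, ∑ i ∈ s, (φ i).1 x = 1 := fun x => by
    simpa using congrFun (congrArg Subtype.val hφ₁) x
  refine ⟨convexState s (fun i => μ.1 (φ i)) T (fun i => μ.2.2 _ (hφ₀ i))
    (by rw [← map_sum, hφ₁, μ.2.1]), fun f g r hf hfg => ?_⟩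
  -- `ν g` is `μ` applied to the interpolant `Σ g(T i) φ_i`, which is uniformly close to `f`.
  set G : (lipOUS X).carrier := ∑ i ∈ s, g.1 (T i) • φ i
  have hG : μ.1 G = ∑ i ∈ s, μ.1 (φ i) * g.1 (T i) := by
    simp only [G, map_sum, map_smul, smul_eq_mul, mul_comm]
  have hfG : ∀ x, |f.1 x - G.1 x| ≤ r + η := fun x => by
    have hGx : G.1 x = ∑ i ∈ s, (φ i).1 x * g.1 (T i) := by simp [G, mul_comm]
    calc |f.1 x - G.1 x| = |∑ i ∈ s, (φ i).1 x * (f.1 x - g.1 (T i))| := by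
          simp only [hGx, mul_sub, Finset.sum_sub_distrib, ← Finset.sum_mul, hφ₁', one_mul]
      _ ≤ ∑ i ∈ s, (φ i).1 x * (r + η) := by
          refine (Finset.abs_sum_le_sum_abs _ _).trans (Finset.sum_le_sum fun i _ => ?_)
          rw [abs_mul, abs_of_nonneg (hφ₀ i x)]
          rcases eq_or_ne ((φ i).1 x) 0 with h | h
          · simp [h]
          refine mul_le_mul_of_nonneg_left ?_ (hφ₀ i x)
          calc |f.1 x - g.1 (T i)| ≤ |f.1 x - f.1 i| + |f.1 i - g.1 (T i)| := abs_sub_le _ _ _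
            _ ≤ η + r := add_le_add ((hf x i).trans (hφη i x h).le) (hfg i)
            _ = r + η := add_comm _ _
      _ = r + η := by rw [← Finset.sum_mul, hφ₁', one_mul]
  calc |μ.1 f - ∑ i ∈ s, μ.1 (φ i) * g.1 (T i)| = |μ.1 (f - G)| := by rw [map_sub, hG]
    _ ≤ r + η := μ.abs_apply_le (lipOUS_normLE hfG)

theorem exists_finite_net_lipschitz (R : ℝ) {η : ℝ} (hη : 0 < η) :
    ∃ F : Set (lipOUS X).carrier, F.Finite ∧ ∀ f : X → ℝ,
      (∀ x x', |f x - f x'| ≤ dist x x') → (∀ x, |f x| ≤ R) →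
        ∃ b ∈ F, ∀ x, |f x - b.1 x| ≤ η := by
  set B : Set (BoundedContinuousFunction X ℝ) :=
    {u | LipschitzWith 1 u ∧ ∀ x, u x ∈ Set.Icc (-R) R}
  have hB : TotallyBounded B :=
    (BoundedContinuousFunction.arzela_ascoli (Set.Icc (-R) R) isCompact_Icc B
      (fun u x hu => hu.2 x) (LipschitzWith.uniformEquicontinuous (fun u : B => ⇑u.1) 1
        fun u => u.2.1).equicontinuous).totallyBounded.subset subset_closure
  obtain ⟨t, htB, htfin, hcov⟩ := Metric.finite_approx_of_totallyBounded hB η hη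
  refine ⟨Subtype.val ⁻¹' ((⇑) '' t), (htfin.image _).preimage Subtype.val_injective.injOn,
    fun f hf hR => ?_⟩
  have hf₁ : LipschitzWith 1 f := LipschitzWith.of_dist_le_mul fun x x' => by
    simpa [Real.dist_eq] using hf x x'
  obtain ⟨v, hvt, hv⟩ := Set.mem_iUnion₂.1 <|
    hcov (a := BoundedContinuousFunction.mkOfCompact ⟨f, hf₁.continuous⟩)
      ⟨hf₁, fun x => abs_le.1 (hR x)⟩
  refine ⟨⟨v, 1, (htB hvt).1⟩, ⟨v, hvt, rfl⟩, fun x => ?_⟩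
  rw [← Real.dist_eq]
  exact ((BoundedContinuousFunction.dist_coe_le_dist x).trans (Metric.mem_ball.1 hv).le)

end LipOUS

structure Gluing (X₁ X₂ : Type) [MetricSpace X₁] [MetricSpace X₂] where
  Z : Type
  [metricSpace : MetricSpace Z]
  p : X₁ → Z
  q : X₂ → Z
  isometry_p : Isometry p
  isometry_q : Isometry q
  sep : ℝ
  sep_pos : 0 < sep

namespace Gluing

attribute [instance] metricSpace

variable {X₁ X₂ : Type} [MetricSpace X₁] [MetricSpace X₂] (G : Gluing X₁ X₂)

-- A copy of `X₁ ⊕ X₂`, to carry the glued metric instead of the library's metric on sums.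
def Space (_ : Gluing X₁ X₂) : Type := X₁ ⊕ X₂

def inl : X₁ → G.Space := Sum.inl

def inr : X₂ → G.Space := Sum.inr

-- `X₁` and `X₂` sit at heights `0` and `sep` in `Z × ℝ`, which carries the max metric.
def embedding : G.Space → G.Z × ℝ := Sum.elim (fun x => (G.p x, 0)) (fun y => (G.q y, G.sep))

theorem embedding_injective : Function.Injective G.embedding := by
  rintro (x | y) (x' | y') h <;> simp only [embedding, Sum.elim_inl, Sum.elim_inr,
    Prod.mk.injEq] at h
  · exact congrArg Sum.inl (G.isometry_p.injective h.1)
  · exact absurd h.2 G.sep_pos.ne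
  · exact absurd h.2 G.sep_pos.ne'
  · exact congrArg Sum.inr (G.isometry_q.injective h.1)

noncomputable instance : MetricSpace G.Space :=
  MetricSpace.induced G.embedding G.embedding_injective inferInstance

theorem dist_inl_inl (x x' : X₁) : dist (G.inl x) (G.inl x') = dist x x' := by
  change dist (G.p x, (0 : ℝ)) (G.p x', 0) = _
  simp [Prod.dist_eq, G.isometry_p.dist_eq]

theorem dist_inr_inr (y y' : X₂) : dist (G.inr y) (G.inr y') = dist y y' := by
  change dist (G.q y, G.sep) (G.q y', G.sep) = _
  simp [Prod.dist_eq, G.isometry_q.dist_eq]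

theorem dist_inl_inr (x : X₁) (y : X₂) :
    dist (G.inl x) (G.inr y) = max (dist (G.p x) (G.q y)) G.sep := by
  change dist (G.p x, (0 : ℝ)) (G.q y, G.sep) = _
  simp [Prod.dist_eq, Real.dist_eq, abs_of_pos G.sep_pos]

@[simp]
theorem elim_inl {α : Type*} (f : X₁ → α) (g : X₂ → α) (x : X₁) :
    (Sum.elim f g : G.Space → α) (G.inl x) = f x := rfl

@[simp]
theorem elim_inr {α : Type*} (f : X₁ → α) (g : X₂ → α) (y : X₂) :
    (Sum.elim f g : G.Space → α) (G.inr y) = g y := rfl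

theorem isometry_inl : Isometry G.inl := Isometry.of_dist_eq G.dist_inl_inl

theorem isometry_inr : Isometry G.inr := Isometry.of_dist_eq G.dist_inr_inr

theorem forall_abs_sub_le_iff {f : X₁ → ℝ} {g : X₂ → ℝ} {K : ℝ} :
    (∀ z w : G.Space, |Sum.elim f g z - Sum.elim f g w| ≤ K * dist z w) ↔
      (∀ x x', |f x - f x'| ≤ K * dist x x') ∧ (∀ y y', |g y - g y'| ≤ K * dist y y') ∧
        ∀ x y, |f x - g y| ≤ K * max (dist (G.p x) (G.q y)) G.sep := by
  constructor
  · intro h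
    refine ⟨fun x x' => ?_, fun y y' => ?_, fun x y => ?_⟩
    · simpa [G.dist_inl_inl] using h (G.inl x) (G.inl x')
    · simpa [G.dist_inr_inr] using h (G.inr y) (G.inr y')
    · simpa [G.dist_inl_inr] using h (G.inl x) (G.inr y)
  · rintro ⟨h₁, h₂, h₁₂⟩ (x | y) (x' | y')
    · change _ ≤ K * dist (G.inl x) (G.inl x')
      simpa [G.dist_inl_inl] using h₁ x x'
    · change _ ≤ K * dist (G.inl x) (G.inr y')
      simpa [G.dist_inl_inr] using h₁₂ x y'
    · change _ ≤ K * dist (G.inr y) (G.inl x')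
      simpa [abs_sub_comm, dist_comm, G.dist_inl_inr] using h₁₂ x' y
    · change _ ≤ K * dist (G.inr y) (G.inr y')
      simpa [G.dist_inr_inr] using h₂ y y'

variable [CompactSpace X₁] [CompactSpace X₂]

theorem elim_mem_lipSubmodule {f : X₁ → ℝ} {g : X₂ → ℝ} (hf : f ∈ lipSubmodule X₁)
    (hg : g ∈ lipSubmodule X₂) : (Sum.elim f g : G.Space → ℝ) ∈ lipSubmodule G.Space := by
  obtain ⟨Kf, hKf⟩ := hf
  obtain ⟨Kg, hKg⟩ := hg
  obtain ⟨Mf, hMf⟩ := exists_abs_le_of_mem_lipSubmodule ⟨Kf, hKf⟩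
  obtain ⟨Mg, hMg⟩ := exists_abs_le_of_mem_lipSubmodule ⟨Kg, hKg⟩
  set K := max (max (Kf : ℝ) Kg) ((Mf + Mg) / G.sep)
  have hKf_le : (Kf : ℝ) ≤ K := (le_max_left _ _).trans (le_max_left _ _)
  have hKg_le : (Kg : ℝ) ≤ K := (le_max_right _ _).trans (le_max_left _ _)
  refine ⟨_, LipschitzWith.of_dist_le' (K := K) fun z w => ?_⟩
  rw [Real.dist_eq]
  refine G.forall_abs_sub_le_iff.2 ⟨fun x x' => ?_, fun y y' => ?_, fun x y => ?_⟩ z w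
  · rw [← Real.dist_eq]
    exact (hKf.dist_le_mul x x').trans (by gcongr)
  · rw [← Real.dist_eq]
    exact (hKg.dist_le_mul y y').trans (by gcongr)
  · calc |f x - g y| ≤ Mf + Mg := (abs_sub _ _).trans (add_le_add (hMf x) (hMg y))
      _ = (Mf + Mg) / G.sep * G.sep := (div_mul_cancel₀ _ G.sep_pos.ne').symm
      _ ≤ K * max (dist (G.p x) (G.q y)) G.sep :=
        mul_le_mul (le_max_right _ _) (le_max_right _ _) G.sep_pos.le
          (Kf.coe_nonneg.trans hKf_le)

noncomputable def elimₗ :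
    lipSubmodule X₁ × lipSubmodule X₂ →ₗ[ℝ] lipSubmodule G.Space where
  toFun a := ⟨Sum.elim a.1.1 a.2.1, G.elim_mem_lipSubmodule a.1.2 a.2.2⟩
  map_add' a b := Subtype.ext (funext fun z => by cases z <;> rfl)
  map_smul' c a := Subtype.ext (funext fun z => by cases z <;> rfl)

noncomputable def bridge : Seminorm ℝ (lipSubmodule X₁ × lipSubmodule X₂) :=
  (lipSeminorm G.Space).comp G.elimₗ

theorem bridge_apply (a : lipSubmodule X₁ × lipSubmodule X₂) :
    G.bridge a = lipConst G.Space (Sum.elim a.1.1 a.2.1) := rfl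

theorem bridge_le_iff (a : lipSubmodule X₁ × lipSubmodule X₂) {K : ℝ} (hK : 0 ≤ K) :
    G.bridge a ≤ K ↔ (∀ x x', |a.1.1 x - a.1.1 x'| ≤ K * dist x x') ∧
      (∀ y y', |a.2.1 y - a.2.1 y'| ≤ K * dist y y') ∧
        ∀ x y, |a.1.1 x - a.2.1 y| ≤ K * max (dist (G.p x) (G.q y)) G.sep := by
  obtain ⟨K₀, hK₀⟩ := G.elim_mem_lipSubmodule a.1.2 a.2.2
  rw [bridge_apply, hK₀.lipConst_le_iff hK, G.forall_abs_sub_le_iff]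

theorem lipConst_fst_le_bridge (a : lipSubmodule X₁ × lipSubmodule X₂) :
    lipConst X₁ a.1.1 ≤ G.bridge a :=
  lipConst_le (apply_nonneg _ _) ((G.bridge_le_iff a (apply_nonneg _ _)).1 le_rfl).1

theorem lipConst_snd_le_bridge (a : lipSubmodule X₁ × lipSubmodule X₂) :
    lipConst X₂ a.2.1 ≤ G.bridge a :=
  lipConst_le (apply_nonneg _ _) ((G.bridge_le_iff a (apply_nonneg _ _)).1 le_rfl).2.1

theorem quotientSeminorm_fst_bridge (f : lipSubmodule X₁) :
    quotientSeminorm Prod.fst (fun a => G.bridge a) f = lipConst X₁ f.1 := by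
  obtain ⟨K, hf⟩ := f.2
  obtain ⟨H, hHf, hH⟩ := G.isometry_inl.exists_lipschitzWith_extension hf
  refine quotientSeminorm_eq (fun a ha => ha ▸ G.lipConst_fst_le_bridge a)
    (a := (f, ⟨H ∘ G.inr, _, hH.comp G.isometry_inr.lipschitz⟩)) rfl ?_
  have hglue : (Sum.elim f.1 (H ∘ G.inr) : G.Space → ℝ) = H := by
    rw [← hHf]; funext z; cases z <;> rfl
  change lipConst G.Space (Sum.elim f.1 (H ∘ G.inr)) ≤ _
  rw [hglue]
  exact hH.lipConst_le.trans_eq (Real.coe_toNNReal _ (lipConst_nonneg _))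

theorem quotientSeminorm_snd_bridge (g : lipSubmodule X₂) :
    quotientSeminorm Prod.snd (fun a => G.bridge a) g = lipConst X₂ g.1 := by
  obtain ⟨K, hg⟩ := g.2
  obtain ⟨H, hHg, hH⟩ := G.isometry_inr.exists_lipschitzWith_extension hg
  refine quotientSeminorm_eq (fun a ha => ha ▸ G.lipConst_snd_le_bridge a)
    (a := (⟨H ∘ G.inl, _, hH.comp G.isometry_inl.lipschitz⟩, g)) rfl ?_
  have hglue : (Sum.elim (H ∘ G.inl) g.1 : G.Space → ℝ) = H := by
    rw [← hHg]; funext z; cases z <;> rfl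
  change lipConst G.Space (Sum.elim (H ∘ G.inl) g.1) ≤ _
  rw [hglue]
  exact hH.lipConst_le.trans_eq (Real.coe_toNNReal _ (lipConst_nonneg _))

variable [Nonempty X₁] [Nonempty X₂]

theorem bridge_isLipschitz : ((lipOUS X₁).prod (lipOUS X₂)).IsLipschitz G.bridge := by
  intro a
  rw [← (apply_nonneg G.bridge a).ge_iff_eq', G.bridge_le_iff a le_rfl]
  simp only [zero_mul, abs_nonpos_iff, sub_eq_zero]
  constructor
  · rintro ⟨h₁, -, h₁₂⟩
    obtain ⟨x₀⟩ := ‹Nonempty X₁›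
    exact ⟨a.1.1 x₀, Prod.ext (Subtype.ext (funext fun x => by simpa using h₁ x x₀))
      (Subtype.ext (funext fun y => by simpa using (h₁₂ x₀ y).symm))⟩
  · rintro ⟨t, rfl⟩
    simp

theorem exists_finite_net_bridge {η : ℝ} (hη : 0 < η) :
    ∃ F : Set ((lipOUS X₁).prod (lipOUS X₂)).carrier, F.Finite ∧ ∀ a, G.bridge a ≤ 1 →
      ∃ b ∈ F, ∃ t : ℝ, ((lipOUS X₁).prod (lipOUS X₂)).NormLE η
        (a - t • ((lipOUS X₁).prod (lipOUS X₂)).e - b) := by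
  obtain ⟨x₀⟩ := ‹Nonempty X₁›
  obtain ⟨R₁, hR₁⟩ : ∃ R, ∀ x : X₁, dist x x₀ ≤ R :=
    ⟨_, fun x => Metric.dist_le_diam_of_mem isCompact_univ.isBounded trivial trivial⟩
  obtain ⟨R₂, hR₂⟩ : ∃ R, ∀ y : X₂, max (dist (G.p x₀) (G.q y)) G.sep ≤ R := by
    obtain ⟨r, hr⟩ :=
      (isCompact_range G.isometry_q.continuous).isBounded.subset_closedBall (G.p x₀)
    exact ⟨max r G.sep, fun y =>
      max_le_max_right _ (by simpa [dist_comm] using hr ⟨y, rfl⟩)⟩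
  obtain ⟨F₁, hF₁, hnet₁⟩ := exists_finite_net_lipschitz (X := X₁) R₁ hη
  obtain ⟨F₂, hF₂, hnet₂⟩ := exists_finite_net_lipschitz (X := X₂) R₂ hη
  refine ⟨F₁ ×ˢ F₂, hF₁.prod hF₂, fun a ha => ?_⟩
  obtain ⟨h₁, h₂, h₁₂⟩ := (G.bridge_le_iff a zero_le_one).1 ha
  simp only [one_mul] at h₁ h₂ h₁₂
  obtain ⟨b₁, hb₁, hab₁⟩ := hnet₁ (fun x => a.1.1 x - a.1.1 x₀)
    (fun x x' => by simpa using h₁ x x') fun x => (h₁ x x₀).trans (hR₁ x)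
  obtain ⟨b₂, hb₂, hab₂⟩ := hnet₂ (fun y => a.2.1 y - a.1.1 x₀)
    (fun y y' => by simpa using h₂ y y') fun y => by
      rw [abs_sub_comm]; exact (h₁₂ x₀ y).trans (hR₂ y)
  exact ⟨(b₁, b₂), ⟨hb₁, hb₂⟩, a.1.1 x₀, OrderUnitSpace.normLE_prod
    (lipOUS_normLE fun x => by simpa using hab₁ x)
    (lipOUS_normLE fun y => by simpa using hab₂ y)⟩

theorem bridge_isLipNorm : ((lipOUS X₁).prod (lipOUS X₂)).IsLipNorm G.bridge :=
  OrderUnitSpace.isLipNorm_of_finite_net G.bridge_isLipschitz fun _ hη =>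
    G.exists_finite_net_bridge hη

theorem bridge_mem_admissible {L₁ : Seminorm ℝ (lipOUS X₁).carrier}
    {L₂ : Seminorm ℝ (lipOUS X₂).carrier} (hL₁ : ∀ f, L₁ f = lipConst X₁ f.1)
    (hL₂ : ∀ g, L₂ g = lipConst X₂ g.1) :
    G.bridge ∈ (lipOUS X₁).admissible (lipOUS X₂) L₁ L₂ :=
  ⟨G.bridge_isLipNorm, fun f => (hL₁ f).trans (G.quotientSeminorm_fst_bridge f).symm,
    fun g => (hL₂ g).trans (G.quotientSeminorm_snd_bridge g).symm⟩

variable {r η : ℝ}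

theorem exists_rightState_rho_le (hη : 0 < η) (hpq : ∀ x, ∃ y, dist (G.p x) (G.q y) ≤ r)
    (μ : (lipOUS X₁).State) : ∃ ν, ((lipOUS X₁).prod (lipOUS X₂)).rho G.bridge
      ((lipOUS X₁).leftState (lipOUS X₂) μ) ((lipOUS X₁).rightState (lipOUS X₂) ν) ≤
        ENNReal.ofReal (max r G.sep + η) := by
  choose T hT using hpq
  obtain ⟨ν, hν⟩ := exists_state_abs_sub_le μ T hη
  refine ⟨ν, OrderUnitSpace.rho_le_ofReal fun a ha => ?_⟩
  obtain ⟨h₁, -, h₁₂⟩ := (G.bridge_le_iff a zero_le_one).1 ha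
  simp only [one_mul] at h₁ h₁₂
  exact hν a.1 a.2 _ h₁ fun x => (h₁₂ x (T x)).trans (max_le_max_right _ (hT x))

theorem exists_leftState_rho_le (hη : 0 < η) (hqp : ∀ y, ∃ x, dist (G.p x) (G.q y) ≤ r)
    (ν : (lipOUS X₂).State) : ∃ μ, ((lipOUS X₁).prod (lipOUS X₂)).rho G.bridge
      ((lipOUS X₁).leftState (lipOUS X₂) μ) ((lipOUS X₁).rightState (lipOUS X₂) ν) ≤
        ENNReal.ofReal (max r G.sep + η) := by
  choose T hT using hqp
  obtain ⟨μ, hμ⟩ := exists_state_abs_sub_le ν T hη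
  refine ⟨μ, OrderUnitSpace.rho_le_ofReal fun a ha => ?_⟩
  obtain ⟨-, h₂, h₁₂⟩ := (G.bridge_le_iff a zero_le_one).1 ha
  simp only [one_mul] at h₂ h₁₂
  rw [abs_sub_comm]
  exact hμ a.2 a.1 _ h₂ fun y => by
    rw [abs_sub_comm]; exact (h₁₂ (T y) y).trans (max_le_max_right _ (hT y))

theorem distq_le_of_hausdorffDist_lt {L₁ : Seminorm ℝ (lipOUS X₁).carrier}
    {L₂ : Seminorm ℝ (lipOUS X₂).carrier} (hL₁ : ∀ f, L₁ f = lipConst X₁ f.1)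
    (hL₂ : ∀ g, L₂ g = lipConst X₂ g.1) (hη : 0 < η)
    (hr : Metric.hausdorffDist (Set.range G.p) (Set.range G.q) < r) :
    (lipOUS X₁).distq (lipOUS X₂) L₁ L₂ ≤ ENNReal.ofReal (max r G.sep + η) := by
  have hfin : Metric.hausdorffEDist (Set.range G.p) (Set.range G.q) ≠ ⊤ :=
    Metric.hausdorffEDist_ne_top_of_nonempty_of_bounded (Set.range_nonempty _)
      (Set.range_nonempty _) (isCompact_range G.isometry_p.continuous).isBounded
      (isCompact_range G.isometry_q.continuous).isBounded
  refine (iInf₂_le _ (G.bridge_mem_admissible hL₁ hL₂)).trans (hausdorffDistWith_range_le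
    (G.exists_rightState_rho_le hη fun x => ?_) (G.exists_leftState_rho_le hη fun y => ?_))
  · obtain ⟨_, ⟨y, rfl⟩, hy⟩ :=
      Metric.exists_dist_lt_of_hausdorffDist_lt (Set.mem_range_self x) hr hfin
    exact ⟨y, hy.le⟩
  · obtain ⟨_, ⟨x, rfl⟩, hx⟩ :=
      Metric.exists_dist_lt_of_hausdorffDist_lt' (Set.mem_range_self y) hr hfin
    exact ⟨x, hx.le⟩

end Gluing

theorem distq_le_ghDist_general (X₁ X₂ : Type)
    [MetricSpace X₁] [CompactSpace X₁] [Nonempty X₁]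
    [MetricSpace X₂] [CompactSpace X₂] [Nonempty X₂]
    (L₁ : Seminorm ℝ (lipOUS X₁).carrier) (L₂ : Seminorm ℝ (lipOUS X₂).carrier)
    (hL₁ : ∀ f : (lipOUS X₁).carrier, L₁ f = lipConst X₁ f.1)
    (hL₂ : ∀ g : (lipOUS X₂).carrier, L₂ g = lipConst X₂ g.1) :
    (lipOUS X₁).distq (lipOUS X₂) L₁ L₂ ≤
      ENNReal.ofReal (GromovHausdorff.ghDist X₁ X₂) := by
  refine ENNReal.le_of_forall_pos_le_add fun ε hε _ => ?_
  have hε₃ : (0 : ℝ) < ε / 3 := by positivity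
  have hD : 0 ≤ GromovHausdorff.ghDist X₁ X₂ := dist_nonneg
  let G : Gluing X₁ X₂ := ⟨_, _, _, GromovHausdorff.isometry_optimalGHInjl X₁ X₂,
    GromovHausdorff.isometry_optimalGHInjr X₁ X₂, ε / 3, hε₃⟩
  calc (lipOUS X₁).distq (lipOUS X₂) L₁ L₂
      ≤ ENNReal.ofReal (max (GromovHausdorff.ghDist X₁ X₂ + ε / 3) (ε / 3) + ε / 3) :=
        G.distq_le_of_hausdorffDist_lt hL₁ hL₂ hε₃
          (GromovHausdorff.hausdorffDist_optimal.trans_lt (by linarith))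
    _ ≤ ENNReal.ofReal (GromovHausdorff.ghDist X₁ X₂) + ε := by
        rw [max_eq_left (by linarith), ← ENNReal.ofReal_coe_nnreal,
          ← ENNReal.ofReal_add hD ε.coe_nonneg]
        exact ENNReal.ofReal_le_ofReal (by linarith)

/-- **Proposition 4.7 of Rieffel.** For nonempty compact metric spaces `(X₁, ρ₁)` and
`(X₂, ρ₂)`, the quantum Gromov–Hausdorff distance between the associated compact
quantum metric spaces `(Lip(X₁), L_{ρ₁})` and `(Lip(X₂), L_{ρ₂})` is at most the
Gromov–Hausdorff distance `dist_GH(X₁, X₂)`. -/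
theorem distq_le_ghDist (X₁ X₂ : Type)
    [MetricSpace X₁] [CompactSpace X₁] [Nonempty X₁]
    [MetricSpace X₂] [CompactSpace X₂] [Nonempty X₂]
    (L₁ : Seminorm ℝ (lipOUS X₁).carrier) (L₂ : Seminorm ℝ (lipOUS X₂).carrier)
    (hL₁ : ∀ f : (lipOUS X₁).carrier, L₁ f = lipConst X₁ f.1)
    (hL₂ : ∀ g : (lipOUS X₂).carrier, L₂ g = lipConst X₂ g.1)
    (hLip₁ : (lipOUS X₁).IsLipNorm L₁) (hLip₂ : (lipOUS X₂).IsLipNorm L₂) :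
    (lipOUS X₁).distq (lipOUS X₂) L₁ L₂ ≤
      ENNReal.ofReal (GromovHausdorff.ghDist X₁ X₂) :=
  distq_le_ghDist_general X₁ X₂ L₁ L₂ hL₁ hL₂
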